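/- arXiv:math-ph/0504039 — 4 statements merged into one kernel-verified Lean document; each statement's English description precedes it below -/
import Mathlib

section
/- Let z ∈ ℂ, let w ∈ ℂ with w² = z and w ≠ 0, let L > 0, and let R : [0, L] → ℂ be differentiable with R'(l) + z + R(l)² = 0 for all l ∈ [0, L]. If cos(w l) + R(0)·sin(w l)/w ≠ 0 for all l ∈ [0, L], then for all l ∈ [0, L], R(l) = ( R(0)·cos(w l) − w·sin(w l) ) / ( cos(w l) + R(0)·sin(w l)/w ). -/
open Set Complex

/-!
Riccati's equation `R' + w² + R² = 0` is linearised by `R = u' / u` with `u'' + w² u = 0`.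
With `u(l) = cos (w l) + R(0) sin (w l) / w` and `v = u'`, the defect `φ = R u - v` vanishes at
`0` and satisfies the linear equation `φ' = -R φ`, so by Grönwall it vanishes on `[0, L]`.
-/

theorem eq_zero_of_hasDerivWithinAt_smul_self {𝕜 E : Type*} [NormedField 𝕜]
    [NormedAddCommGroup E] [NormedSpace ℝ E] [NormedSpace 𝕜 E] {A : ℝ → 𝕜} {φ : ℝ → E}
    {a b : ℝ} (hA : ContinuousOn A (Icc a b))
    (hφ : ∀ t ∈ Icc a b, HasDerivWithinAt φ (A t • φ t) (Icc a b) t) (ha : φ a = 0) :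
    ∀ t ∈ Icc a b, φ t = 0 := by
  obtain ⟨K, hK⟩ := isCompact_Icc.exists_bound_of_continuousOn hA
  refine eq_zero_of_abs_deriv_le_mul_abs_self_of_eq_zero_right (K := K) (f' := fun t => A t • φ t)
    (fun t ht => (hφ t ht).continuousWithinAt) (fun t ht => ?_) ha (fun t ht => ?_)
  · exact (hφ t (Ico_subset_Icc_self ht)).mono_of_mem_nhdsWithin <|
      Filter.mem_of_superset (Icc_mem_nhdsGE_of_mem ⟨le_rfl, ht.2⟩) (Icc_subset_Icc ht.1 le_rfl)
  · calc ‖A t • φ t‖ ≤ ‖A t‖ * ‖φ t‖ := norm_smul_le _ _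
      _ ≤ K * ‖φ t‖ := by gcongr; exact hK t (Ico_subset_Icc_self ht)

theorem HasDerivWithinAt.riccati_mul_sub {𝔸 : Type*} [NormedCommRing 𝔸] [NormedAlgebra ℝ 𝔸]
    {R u v : ℝ → 𝔸} {z : 𝔸} {s : Set ℝ} {t : ℝ}
    (hR : HasDerivWithinAt R (-(z + R t ^ 2)) s t) (hu : HasDerivWithinAt u (v t) s t)
    (hv : HasDerivWithinAt v (-z * u t) s t) :
    HasDerivWithinAt (fun t => R t * u t - v t) (-R t * (R t * u t - v t)) s t :=
  ((hR.mul hu).sub hv).congr_deriv (by ring)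

theorem hasDerivAt_cos_mul_ofReal (w : ℂ) (t : ℝ) :
    HasDerivAt (fun t : ℝ => cos (w * t)) (-sin (w * t) * w) t := by
  simpa using ((hasDerivAt_id (t : ℂ)).const_mul w).ccos.comp_ofReal

theorem hasDerivAt_sin_mul_ofReal (w : ℂ) (t : ℝ) :
    HasDerivAt (fun t : ℝ => sin (w * t)) (cos (w * t) * w) t := by
  simpa using ((hasDerivAt_id (t : ℂ)).const_mul w).csin.comp_ofReal

section TrigonometricSolution

variable {w : ℂ} (c : ℂ)

theorem hasDerivAt_cos_add_mul_sin_div (hw : w ≠ 0) (t : ℝ) :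
    HasDerivAt (fun t : ℝ => cos (w * t) + c * sin (w * t) / w)
      (c * cos (w * t) - w * sin (w * t)) t := by
  refine ((hasDerivAt_cos_mul_ofReal w t).add
    (((hasDerivAt_sin_mul_ofReal w t).const_mul c).div_const w)).congr_deriv ?_
  field_simp
  ring

theorem hasDerivAt_mul_cos_sub_mul_sin (hw : w ≠ 0) (t : ℝ) :
    HasDerivAt (fun t : ℝ => c * cos (w * t) - w * sin (w * t))
      (-w ^ 2 * (cos (w * t) + c * sin (w * t) / w)) t := by
  refine (((hasDerivAt_cos_mul_ofReal w t).const_mul c).sub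
    ((hasDerivAt_sin_mul_ofReal w t).const_mul w)).congr_deriv ?_
  field_simp
  ring

end TrigonometricSolution

theorem moebius_integrates_riccati_general
    (z w : ℂ) (hw : w ^ 2 = z) (hw0 : w ≠ 0) (L : ℝ)
    (R : ℝ → ℂ)
    (hRic : ∀ l ∈ Icc (0 : ℝ) L,
      HasDerivWithinAt R (-(z + R l ^ 2)) (Icc 0 L) l)
    (hden : ∀ l ∈ Icc (0 : ℝ) L,
      Complex.cos (w * l) + R 0 * Complex.sin (w * l) / w ≠ 0) :
    ∀ l ∈ Icc (0 : ℝ) L,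
      R l = (R 0 * Complex.cos (w * l) - w * Complex.sin (w * l)) /
        (Complex.cos (w * l) + R 0 * Complex.sin (w * l) / w) := by
  subst hw
  have hdefect := eq_zero_of_hasDerivWithinAt_smul_self (A := fun t => -R t)
    (fun t ht => (hRic t ht).continuousWithinAt.neg)
    (fun t ht => (hRic t ht).riccati_mul_sub
      (hasDerivAt_cos_add_mul_sin_div (R 0) hw0 t).hasDerivWithinAt
      (hasDerivAt_mul_cos_sub_mul_sin (R 0) hw0 t).hasDerivWithinAt)
    (by simp)
  intro l hl
  rw [eq_div_iff (hden l hl)]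
  exact sub_eq_zero.mp (hdefect l hl)

/-- The Möbius transformation (A.5) integrates the Riccati equation
`R' + z + R² = 0`: if `R` solves the Riccati equation on `[0,L]` and the
denominator `cos(w l) + R(0)·sin(w l)/w` never vanishes, then
`R(l) = (R(0)·cos(w l) - w·sin(w l)) / (cos(w l) + R(0)·sin(w l)/w)`. -/
theorem moebius_integrates_riccati
    (z w : ℂ) (hw : w ^ 2 = z) (hw0 : w ≠ 0) (L : ℝ) (hL : 0 < L)
    (R : ℝ → ℂ)
    (hRic : ∀ l ∈ Icc (0 : ℝ) L,
      HasDerivWithinAt R (-(z + R l ^ 2)) (Icc 0 L) l)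
    (hden : ∀ l ∈ Icc (0 : ℝ) L,
      Complex.cos (w * l) + R 0 * Complex.sin (w * l) / w ≠ 0) :
    ∀ l ∈ Icc (0 : ℝ) L,
      R l = (R 0 * Complex.cos (w * l) - w * Complex.sin (w * l)) /
        (Complex.cos (w * l) + R 0 * Complex.sin (w * l) / w) :=
  moebius_integrates_riccati_general z w hw hw0 L R hRic hden
end

section
/- Let z ∈ ℂ, let w ∈ ℂ with w² = z and w ≠ 0, let L > 0, and let ψ : [0, L] → ℂ be twice continuously differentiable with ψ''(l) = −z·ψ(l) for all l ∈ [0, L]. Assume ψ(0) ≠ 0 and ψ(L) ≠ 0, and set R₀ := ψ'(0)/ψ(0) and R_L := ψ'(L)/ψ(L). Then e^{−√|z|·L}·(1 + |R_L|/√|z|)^{−1} ≤ |ψ(L)/ψ(0)| ≤ e^{√|z|·L}·(1 + |R₀|/√|z|). -/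
/-!
The pair `v = (ψ, ψ'/√|z|)` solves a first-order linear system whose matrix has
sup-operator norm `√|z|`, so Grönwall's inequality, run forwards and backwards on `[0, L]`,
lets `‖v‖` grow or decay at most like `e^{√|z| l}`. Since `|ψ| ≤ ‖v‖ ≤ |ψ| + |ψ'|/√|z|`,
both bounds follow.
-/

open Set Complex

section Gronwall

variable {E : Type*} [NormedAddCommGroup E] [NormedSpace ℝ E] {f f' : ℝ → E} {K a b : ℝ}

theorem norm_le_norm_mul_exp_of_norm_deriv_le (hab : a ≤ b)
    (hf : ∀ x ∈ Icc a b, HasDerivWithinAt f (f' x) (Icc a b) x)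
    (bound : ∀ x ∈ Icc a b, ‖f' x‖ ≤ K * ‖f x‖) :
    ‖f b‖ ≤ ‖f a‖ * Real.exp (K * (b - a)) := by
  have hright : ∀ x ∈ Ico a b, HasDerivWithinAt f (f' x) (Ici x) x := fun x hx =>
    (hf x (Ico_subset_Icc_self hx)).mono_of_mem_nhdsWithin (Icc_mem_nhdsGE_of_mem hx)
  have h := norm_le_gronwallBound_of_norm_deriv_right_le (K := K) (ε := 0)
    (fun x hx => (hf x hx).continuousWithinAt) hright le_rfl
    (fun x hx => (add_zero (K * ‖f x‖)).symm ▸ bound x (Ico_subset_Icc_self hx))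
    b (right_mem_Icc.2 hab)
  rwa [gronwallBound_ε0] at h

theorem norm_le_norm_mul_exp_of_norm_deriv_le_rev (hab : a ≤ b)
    (hf : ∀ x ∈ Icc a b, HasDerivWithinAt f (f' x) (Icc a b) x)
    (bound : ∀ x ∈ Icc a b, ‖f' x‖ ≤ K * ‖f x‖) :
    ‖f a‖ ≤ ‖f b‖ * Real.exp (K * (b - a)) := by
  have hneg : MapsTo Neg.neg (Icc (-b) (-a)) (Icc a b) := fun x hx =>
    ⟨le_neg_of_le_neg hx.2, neg_le_of_neg_le hx.1⟩
  have h := norm_le_norm_mul_exp_of_norm_deriv_le (f := f ∘ Neg.neg)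
    (f' := fun x => (-1 : ℝ) • f' (-x)) (K := K) (neg_le_neg hab)
    (fun x hx => (hf (-x) (hneg hx)).scomp x (hasDerivWithinAt_neg x _) hneg)
    (fun x hx => by simpa [norm_smul] using bound (-x) (hneg hx))
  simpa [sub_eq_add_neg, add_comm] using h

end Gronwall

theorem norm_prod_neg_mul_eq {z : ℂ} {k : ℝ} (hk : 0 < k) (hkz : k ^ 2 = ‖z‖) (x y : ℂ) :
    ‖(y, k⁻¹ • (-z * x))‖ = k * ‖(x, k⁻¹ • y)‖ := by
  simp only [Prod.norm_def, norm_smul, norm_mul, norm_neg,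
    Real.norm_of_nonneg (inv_pos.2 hk).le, ← hkz, mul_max_of_nonneg _ _ hk.le]
  rw [max_comm]
  congr 1 <;> field_simp

section FreeSchroedinger

variable {z : ℂ} {a b : ℝ} {ψ ψ' ψ'' : ℝ → ℂ}

theorem norm_le_exp_mul_of_deriv_deriv_eq_neg_mul (hz : z ≠ 0) (hab : a ≤ b)
    (hderiv : ∀ l ∈ Icc a b, HasDerivWithinAt ψ (ψ' l) (Icc a b) l)
    (hderiv' : ∀ l ∈ Icc a b, HasDerivWithinAt ψ' (ψ'' l) (Icc a b) l)
    (hODE : ∀ l ∈ Icc a b, ψ'' l = -z * ψ l) :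
    ‖ψ b‖ ≤ Real.exp (√‖z‖ * (b - a)) * (‖ψ a‖ + ‖ψ' a‖ / √‖z‖) ∧
      ‖ψ a‖ ≤ Real.exp (√‖z‖ * (b - a)) * (‖ψ b‖ + ‖ψ' b‖ / √‖z‖) := by
  set k := √‖z‖
  have hk : 0 < k := Real.sqrt_pos.2 (norm_pos_iff.2 hz)
  let v : ℝ → ℂ × ℂ := fun l => (ψ l, k⁻¹ • ψ' l)
  have hv : ∀ l ∈ Icc a b, HasDerivWithinAt v (ψ' l, k⁻¹ • ψ'' l) (Icc a b) l := fun l hl =>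
    (hderiv l hl).prodMk ((hderiv' l hl).const_smul k⁻¹)
  have hbound : ∀ l ∈ Icc a b, ‖(ψ' l, k⁻¹ • ψ'' l)‖ ≤ k * ‖v l‖ := fun l hl => by
    rw [hODE l hl, norm_prod_neg_mul_eq hk (Real.sq_sqrt (norm_nonneg z))]
  have hψ_le : ∀ l, ‖ψ l‖ ≤ ‖v l‖ := fun l => norm_fst_le (v l)
  have hv_le : ∀ l, ‖v l‖ ≤ ‖ψ l‖ + ‖ψ' l‖ / k := fun l => by
    simp only [v, Prod.norm_def, norm_smul, Real.norm_of_nonneg (inv_pos.2 hk).le]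
    exact max_le (le_add_of_nonneg_right (by positivity))
      (le_add_of_nonneg_left (by positivity)) |>.trans_eq (by ring)
  constructor
  · calc ‖ψ b‖ ≤ ‖v a‖ * Real.exp (k * (b - a)) :=
          (hψ_le b).trans (norm_le_norm_mul_exp_of_norm_deriv_le hab hv hbound)
      _ ≤ _ := by rw [mul_comm]; gcongr; exact hv_le a
  · calc ‖ψ a‖ ≤ ‖v b‖ * Real.exp (k * (b - a)) :=
          (hψ_le a).trans (norm_le_norm_mul_exp_of_norm_deriv_le_rev hab hv hbound)
      _ ≤ _ := by rw [mul_comm]; gcongr; exact hv_le b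

end FreeSchroedinger

theorem norm_add_norm_div_eq_mul {𝕜 : Type*} [NormedField 𝕜] {x : 𝕜} (hx : x ≠ 0) (y : 𝕜)
    (k : ℝ) :
    ‖x‖ + ‖y‖ / k = ‖x‖ * (1 + ‖y / x‖ / k) := by
  have : ‖x‖ ≠ 0 := norm_ne_zero_iff.2 hx
  rw [norm_div]
  field_simp

theorem free_schroedinger_exponential_bounds_general
    (z w : ℂ) (hw : w ^ 2 = z) (hw0 : w ≠ 0) (L : ℝ) (hL : 0 < L)
    (ψ ψ' ψ'' : ℝ → ℂ)
    (hderiv : ∀ l ∈ Icc (0 : ℝ) L, HasDerivWithinAt ψ (ψ' l) (Icc 0 L) l)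
    (hderiv' : ∀ l ∈ Icc (0 : ℝ) L, HasDerivWithinAt ψ' (ψ'' l) (Icc 0 L) l)
    (hODE : ∀ l ∈ Icc (0 : ℝ) L, ψ'' l = -z * ψ l)
    (h0 : ψ 0 ≠ 0) (hLne : ψ L ≠ 0) :
    Real.exp (-(Real.sqrt (‖z‖) * L)) *
        (1 + ‖ψ' L / ψ L‖ / Real.sqrt (‖z‖))⁻¹ ≤
      ‖ψ L / ψ 0‖ ∧
    ‖ψ L / ψ 0‖ ≤
      Real.exp (Real.sqrt (‖z‖) * L) *
        (1 + ‖ψ' 0 / ψ 0‖ / Real.sqrt (‖z‖)) := by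
  have hz : z ≠ 0 := hw ▸ pow_ne_zero 2 hw0
  obtain ⟨hfwd, hbwd⟩ :=
    norm_le_exp_mul_of_deriv_deriv_eq_neg_mul hz hL.le hderiv hderiv' hODE
  rw [sub_zero, norm_add_norm_div_eq_mul h0] at hfwd
  rw [sub_zero, norm_add_norm_div_eq_mul hLne] at hbwd
  have hψ0 : 0 < ‖ψ 0‖ := norm_pos_iff.2 h0
  rw [norm_div (ψ L), Real.exp_neg, ← mul_inv, le_div_iff₀ hψ0,
    inv_mul_le_iff₀ (by positivity), div_le_iff₀ hψ0]
  constructor <;> linarith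

/-- The two-sided exponential bound (A.7): for a `C²` solution of `ψ'' = -z ψ`
on `[0,L]` with `ψ(0) ≠ 0`, `ψ(L) ≠ 0`, setting `R₀ = ψ'(0)/ψ(0)` and
`R_L = ψ'(L)/ψ(L)`,
`e^{-√|z| L}·(1 + |R_L|/√|z|)⁻¹ ≤ |ψ(L)/ψ(0)| ≤ e^{√|z| L}·(1 + |R₀|/√|z|)`. -/
theorem free_schroedinger_exponential_bounds
    (z w : ℂ) (hw : w ^ 2 = z) (hw0 : w ≠ 0) (L : ℝ) (hL : 0 < L)
    (ψ ψ' ψ'' : ℝ → ℂ)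
    (hderiv : ∀ l ∈ Icc (0 : ℝ) L, HasDerivWithinAt ψ (ψ' l) (Icc 0 L) l)
    (hderiv' : ∀ l ∈ Icc (0 : ℝ) L, HasDerivWithinAt ψ' (ψ'' l) (Icc 0 L) l)
    (hcont : ContinuousOn ψ'' (Icc 0 L))
    (hODE : ∀ l ∈ Icc (0 : ℝ) L, ψ'' l = -z * ψ l)
    (h0 : ψ 0 ≠ 0) (hLne : ψ L ≠ 0) :
    Real.exp (-(Real.sqrt (‖z‖) * L)) *
        (1 + ‖ψ' L / ψ L‖ / Real.sqrt (‖z‖))⁻¹ ≤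
      ‖ψ L / ψ 0‖ ∧
    ‖ψ L / ψ 0‖ ≤
      Real.exp (Real.sqrt (‖z‖) * L) *
        (1 + ‖ψ' 0 / ψ 0‖ / Real.sqrt (‖z‖)) :=
  free_schroedinger_exponential_bounds_general z w hw hw0 L hL ψ ψ' ψ'' hderiv hderiv' hODE h0 hLne
end

section
/- Let w ∈ ℂ with Im w > 0, let L > 0, and let R ∈ ℂ with R ≠ −i w. If |(R − i w)/(R + i w)| ≤ e^{−2 L · Im w}, then |R| ≤ 2|w| / (1 − e^{−2 L · Im w}). -/
open Complex

/-! If `|m| ≤ q < 1` for the Cayley variable `m = (R - a)/(R + a)`, then the triangle inequality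
applied to `‖R - a‖ ≤ q ‖R + a‖` gives `(1 - q) ‖R‖ ≤ (1 + q) ‖a‖`. With `a = i w` and
`q = e^{-2 L Im w}`, which is `< 1` because `L Im w > 0`, this is the bound, since `1 + q ≤ 2`. -/

theorem one_sub_mul_norm_le_of_norm_sub_le {E : Type*} [SeminormedAddCommGroup E]
    {z a : E} {q : ℝ} (hq : 0 ≤ q)
    (h : ‖z - a‖ ≤ q * ‖z + a‖) : (1 - q) * ‖z‖ ≤ (1 + q) * ‖a‖ := by
  have h₁ : ‖z‖ - ‖a‖ ≤ ‖z - a‖ := norm_sub_norm_le z a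
  have h₂ : q * ‖z + a‖ ≤ q * (‖z‖ + ‖a‖) := mul_le_mul_of_nonneg_left (norm_add_le z a) hq
  linarith

theorem norm_le_of_norm_cayley_le {𝕜 : Type*} [NormedDivisionRing 𝕜] {z a : 𝕜} {q : ℝ}
    (hq : q < 1) (h : ‖(z - a) / (z + a)‖ ≤ q) : ‖z‖ ≤ (1 + q) / (1 - q) * ‖a‖ := by
  have hq₀ : 0 ≤ q := (norm_nonneg _).trans h
  rw [div_mul_eq_mul_div, le_div_iff₀ (sub_pos.mpr hq), mul_comm]
  -- when `z + a = 0` the quotient is the junk value `0`, and `z = -a`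
  by_cases hza : z + a = 0
  · rw [eq_neg_of_add_eq_zero_left hza, norm_neg]
    nlinarith [norm_nonneg a]
  · rw [norm_div, div_le_iff₀ (norm_pos_iff.mpr hza)] at h
    exact one_sub_mul_norm_le_of_norm_sub_le hq₀ h

theorem bound_R_of_bound_m_general (w : ℂ) (hw : 0 < w.im) (L : ℝ) (hL : 0 < L)
    (R : ℂ)
    (hm : ‖(R - Complex.I * w) / (R + Complex.I * w)‖ ≤
      Real.exp (-2 * L * w.im)) :
    ‖R‖ ≤ 2 * ‖w‖ / (1 - Real.exp (-2 * L * w.im)) := by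
  set q := Real.exp (-2 * L * w.im)
  have hq₁ : q < 1 := Real.exp_lt_one_iff.mpr (by nlinarith)
  have hR := norm_le_of_norm_cayley_le hq₁ hm
  rw [norm_mul, Complex.norm_I, one_mul] at hR
  calc ‖R‖ ≤ (1 + q) / (1 - q) * ‖w‖ := hR
    _ ≤ 2 / (1 - q) * ‖w‖ := by gcongr; linarith
    _ = 2 * ‖w‖ / (1 - q) := div_mul_eq_mul_div _ _ _

/-- The a priori bound (A.2): if `Im w > 0`, `L > 0`, `R ≠ -i w` and the disk
variable `m = (R - i w)/(R + i w)` satisfies `|m| ≤ e^{-2 L Im w}`, then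
`|R| ≤ 2|w|/(1 - e^{-2 L Im w})`. -/
theorem bound_R_of_bound_m (w : ℂ) (hw : 0 < w.im) (L : ℝ) (hL : 0 < L)
    (R : ℂ) (hR : R ≠ -Complex.I * w)
    (hm : ‖(R - Complex.I * w) / (R + Complex.I * w)‖ ≤
      Real.exp (-2 * L * w.im)) :
    ‖R‖ ≤ 2 * ‖w‖ / (1 - Real.exp (-2 * L * w.im)) :=
  bound_R_of_bound_m_general w hw L hL R hm
end

section
/- Let z ∈ ℂ, let w ∈ ℂ with w² = z, w ≠ 0 and Im w > 0, let L > 0, and let ψ : [0, L] → ℂ be twice continuously differentiable with ψ''(l) = −z·ψ(l) for all l ∈ [0, L]. If |ψ'(L) − i w·ψ(L)| ≤ |ψ'(L) + i w·ψ(L)|, then |ψ'(0) − i w·ψ(0)| ≤ e^{−2 L · Im w} · |ψ'(0) + i w·ψ(0)|. -/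
open Set Complex

/-! For either square root `c = ±i w` of `-z`, the quantity `(ψ' - c ψ) e^{c l}` is constant along
a solution of `ψ'' = -z ψ`. Hence going from `L` back to `0` multiplies `|ψ' - i w ψ|` by
`e^{-L Im w}` and `|ψ' + i w ψ|` by `e^{L Im w}`, and the ratio of the two shrinks by
`e^{-2 L Im w}`. -/

lemma hasDerivAt_cexp_mul_ofReal (c : ℂ) (x : ℝ) :
    HasDerivAt (fun l : ℝ => exp (c * l)) (exp (c * x) * c) x := by
  simpa using ((hasDerivAt_id (x : ℂ)).const_mul c).cexp.comp_ofReal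

theorem sub_mul_mul_cexp_eq_of_ode {a b : ℝ} (hab : a ≤ b) {z c : ℂ}
    (hc : c ^ 2 = -z) {ψ ψ' ψ'' : ℝ → ℂ}
    (hψ : ∀ l ∈ Icc a b, HasDerivWithinAt ψ (ψ' l) (Icc a b) l)
    (hψ' : ∀ l ∈ Icc a b, HasDerivWithinAt ψ' (ψ'' l) (Icc a b) l)
    (hODE : ∀ l ∈ Icc a b, ψ'' l = -z * ψ l) :
    (ψ' b - c * ψ b) * exp (c * b) = (ψ' a - c * ψ a) * exp (c * a) := by
  have hderiv : ∀ l ∈ Icc a b, HasDerivWithinAt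
      (fun l : ℝ => (ψ' l - c * ψ l) * exp (c * l)) 0 (Icc a b) l := by
    intro l hl
    refine (((hψ' l hl).sub ((hψ l hl).const_mul c)).mul
      (hasDerivAt_cexp_mul_ofReal c l).hasDerivWithinAt).congr_deriv ?_
    rw [hODE l hl, ← neg_eq_iff_eq_neg.mpr hc, Pi.sub_apply]
    ring
  have h := norm_image_sub_le_of_norm_deriv_le_segment' hderiv (C := 0)
    (fun _ _ => norm_zero.le) b (right_mem_Icc.2 hab)
  simpa [sub_eq_zero] using h

lemma norm_cexp_mul_ofReal (c : ℂ) (x : ℝ) : ‖exp (c * x)‖ = Real.exp (c.re * x) := by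
  rw [norm_exp, re_mul_ofReal]

theorem disk_variable_contraction_general
    (z w : ℂ) (hw : w ^ 2 = z)
    (L : ℝ) (hL : 0 < L) (ψ ψ' ψ'' : ℝ → ℂ)
    (hderiv : ∀ l ∈ Icc (0 : ℝ) L, HasDerivWithinAt ψ (ψ' l) (Icc 0 L) l)
    (hderiv' : ∀ l ∈ Icc (0 : ℝ) L, HasDerivWithinAt ψ' (ψ'' l) (Icc 0 L) l)
    (hODE : ∀ l ∈ Icc (0 : ℝ) L, ψ'' l = -z * ψ l)
    (hend : ‖ψ' L - Complex.I * w * ψ L‖ ≤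
      ‖ψ' L + Complex.I * w * ψ L‖) :
    ‖ψ' 0 - Complex.I * w * ψ 0‖ ≤
      Real.exp (-2 * L * w.im) * ‖ψ' 0 + Complex.I * w * ψ 0‖ := by
  have propagate (c : ℂ) (hc : c ^ 2 = -z) :
      ‖ψ' 0 - c * ψ 0‖ = ‖ψ' L - c * ψ L‖ * Real.exp (c.re * L) := by
    rw [← norm_cexp_mul_ofReal, ← norm_mul]
    simpa using congrArg norm
      (sub_mul_mul_cexp_eq_of_ode hL.le hc hderiv hderiv' hODE).symm
  have hminus := propagate (I * w) (by rw [mul_pow, I_sq, hw]; ring)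
  have hplus := propagate (-(I * w)) (by rw [neg_sq, mul_pow, I_sq, hw]; ring)
  simp only [neg_mul, sub_neg_eq_add, neg_re, mul_re, I_re, I_im, zero_mul, one_mul,
    zero_sub, neg_neg] at hminus hplus
  calc ‖ψ' 0 - I * w * ψ 0‖
      = ‖ψ' L - I * w * ψ L‖ * Real.exp (-(w.im * L)) := hminus
    _ ≤ ‖ψ' L + I * w * ψ L‖ * Real.exp (-(w.im * L)) := by gcongr
    _ = Real.exp (-2 * L * w.im) * ‖ψ' 0 + I * w * ψ 0‖ := by
        rw [hplus, mul_left_comm, ← Real.exp_add]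
        ring_nf

/-- Lemma A.2(i): for a `C²` solution of `ψ'' = -z ψ` on `[0,L]` with
`w² = z`, `w ≠ 0`, `Im w > 0`, if `|ψ'(L) - i w ψ(L)| ≤ |ψ'(L) + i w ψ(L)|`
then `|ψ'(0) - i w ψ(0)| ≤ e^{-2 L Im w}·|ψ'(0) + i w ψ(0)|`. -/
theorem disk_variable_contraction
    (z w : ℂ) (hw : w ^ 2 = z) (hw0 : w ≠ 0) (hwim : 0 < w.im)
    (L : ℝ) (hL : 0 < L) (ψ ψ' ψ'' : ℝ → ℂ)
    (hderiv : ∀ l ∈ Icc (0 : ℝ) L, HasDerivWithinAt ψ (ψ' l) (Icc 0 L) l)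
    (hderiv' : ∀ l ∈ Icc (0 : ℝ) L, HasDerivWithinAt ψ' (ψ'' l) (Icc 0 L) l)
    (hcont : ContinuousOn ψ'' (Icc 0 L))
    (hODE : ∀ l ∈ Icc (0 : ℝ) L, ψ'' l = -z * ψ l)
    (hend : ‖ψ' L - Complex.I * w * ψ L‖ ≤
      ‖ψ' L + Complex.I * w * ψ L‖) :
    ‖ψ' 0 - Complex.I * w * ψ 0‖ ≤
      Real.exp (-2 * L * w.im) * ‖ψ' 0 + Complex.I * w * ψ 0‖ :=
  disk_variable_contraction_general z w hw L hL ψ ψ' ψ'' hderiv hderiv' hODE hend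
end
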